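/- arXiv:0911.5433 — 4 statements merged into one kernel-verified Lean document; each statement's English description precedes it below -/
import Mathlib

section
/- Let G be a group with a total subgroup chain G = G₁ ≥ G₂ ≥ ... ≥ Gₙ = {1}, and for each 1 ≤ i < n let rᵢ : G → G be a right-coset representative function for G_{i+1} mapping Gᵢ into Gᵢ. Let g₁ = g, g_{i+1} = gᵢ·rᵢ(gᵢ)⁻¹ be the Lagrange coordinates of g ∈ G. Then flattening recovers g: the descending product r_{n-1}(g_{n-1}) · r_{n-2}(g_{n-2}) · ... · r₁(g₁) equals g. -/
/-- Let `G` be a group with a total subgroup chain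
`G = G₁ ≥ … ≥ Gₙ = {1}` (0-indexed: `Gs 0 = ⊤`, `Gs (n-1) = ⊥`), with
right-coset representative functions `rᵢ` for `G_{i+1}` mapping `Gᵢ` into `Gᵢ`,
and let `g₁ = g`, `g_{i+1} = gᵢ · rᵢ(gᵢ)⁻¹` be the Lagrange coordinates of `g`.
Then flattening recovers `g`: the descending product
`r_{n-1}(g_{n-1}) · r_{n-2}(g_{n-2}) ⋯ r₁(g₁) = g`. -/
theorem lagrange_flatten_state {G : Type*} [Group G] (n : ℕ) (hn : 1 ≤ n)
    (Gs : ℕ → Subgroup G) (htop : Gs 0 = ⊤) (hbot : Gs (n - 1) = ⊥)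
    (hchain : ∀ i, i + 1 < n → Gs (i + 1) ≤ Gs i)
    (r : ℕ → G → G)
    (hmem : ∀ i, i + 1 < n → ∀ g : G, r i g * g⁻¹ ∈ Gs (i + 1))
    (hconst : ∀ i, i + 1 < n → ∀ g g' : G, g * g'⁻¹ ∈ Gs (i + 1) → r i g = r i g')
    (hmap : ∀ i, i + 1 < n → ∀ g ∈ Gs i, r i g ∈ Gs i)
    (g : G) (coords : ℕ → G) (hc0 : coords 0 = g)
    (hcstep : ∀ i, i + 1 < n → coords (i + 1) = coords i * (r i (coords i))⁻¹) :
    (((List.range (n - 1)).reverse).map (fun i => r i (coords i))).prod = g := by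
  have key : ∀ k, k ≤ n - 1 →
      (((List.range k).reverse).map (fun i => r i (coords i))).prod = (coords k)⁻¹ * g := by
    intro k hk
    induction k with
    | zero => simp [hc0]
    | succ m ih =>
        have hm1 : m + 1 < n := by omega
        have hm : m ≤ n - 1 := by omega
        rw [List.range_succ, List.reverse_append, List.map_append, List.prod_append,
          ih hm, hcstep m hm1]
        simp [mul_assoc]
  have hmemc : ∀ k, k + 1 < n → coords (k + 1) ∈ Gs (k + 1) := by
    intro k hk
    rw [hcstep k hk]
    have := hmem k hk (coords k)
    have : (r k (coords k) * (coords k)⁻¹)⁻¹ ∈ Gs (k + 1) := (Gs (k + 1)).inv_mem this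
    simpa [mul_inv_rev] using this
  have hlast : coords (n - 1) = 1 := by
    rcases Nat.lt_or_ge 1 n with h | h
    · have h2 : (n - 2) + 1 < n := by omega
      have := hmemc (n - 2) h2
      have heq : n - 2 + 1 = n - 1 := by omega
      rw [heq, hbot] at this
      simpa using this
    · have h1 : n = 1 := by omega
      subst h1
      have hm : coords 0 ∈ Gs 0 := by rw [htop]; trivial
      rw [hbot] at hm
      simpa using hm
  rw [key (n - 1) le_rfl, hlast]
  simp
end

section
/- Let G be a group with a subgroup chain G = G₁ ≥ G₂ ≥ ... ≥ Gₙ = H ending at a subgroup H, and for each 1 ≤ i < n let rᵢ : G → G be a right-coset representative function for G_{i+1} mapping Gᵢ into Gᵢ. Then for g, g' ∈ G, the raising map ρ_s satisfies ρ_s(g) = ρ_s(g') if and only if g and g' lie in the same right coset of H (i.e., H·g = H·g'). Consequently ρ_s induces a bijection from the right coset space of H in G onto its image. -/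
open scoped Pointwise

/-- Let `G` be a group with a subgroup chain
`G = G₁ ≥ … ≥ Gₙ = H` ending at a subgroup `H` (0-indexed: `Gs 0 = ⊤`,
`Gs (n-1) = H`), with right-coset representative functions `rᵢ` for `G_{i+1}`
mapping `Gᵢ` into `Gᵢ`. Then for `g, g' ∈ G` the raising map `ρ_s` satisfies
`ρ_s(g) = ρ_s(g')` if and only if `g` and `g'` lie in the same right coset of
`H` (i.e. `H·g = H·g'`).  (Hence `ρ_s` induces a bijection from the right coset
space of `H` onto its image.) -/
theorem lagrange_raising_eq_iff_same_coset {G : Type*} [Group G]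
    (n : ℕ) (hn : 1 ≤ n)
    (Gs : ℕ → Subgroup G) (H : Subgroup G)
    (htop : Gs 0 = ⊤) (hend : Gs (n - 1) = H)
    (hchain : ∀ i, i + 1 < n → Gs (i + 1) ≤ Gs i)
    (r : ℕ → G → G)
    (hmem : ∀ i, i + 1 < n → ∀ g : G, r i g * g⁻¹ ∈ Gs (i + 1))
    (hconst : ∀ i, i + 1 < n → ∀ g g' : G, g * g'⁻¹ ∈ Gs (i + 1) → r i g = r i g')
    (hmap : ∀ i, i + 1 < n → ∀ g ∈ Gs i, r i g ∈ Gs i)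
    (g g' : G) (coords coords' : ℕ → G)
    (hc0 : coords 0 = g)
    (hcstep : ∀ i, i + 1 < n → coords (i + 1) = coords i * (r i (coords i))⁻¹)
    (hc0' : coords' 0 = g')
    (hcstep' : ∀ i, i + 1 < n → coords' (i + 1) = coords' i * (r i (coords' i))⁻¹) :
    (∀ i, i + 1 < n → r i (coords i) = r i (coords' i)) ↔
      (H : Set G) * ({g} : Set G) = (H : Set G) * ({g'} : Set G) := by

  -- coset equality ↔ membership
  have hcoset : ((H : Set G) * ({g} : Set G) = (H : Set G) * ({g'} : Set G)) ↔
      g * g'⁻¹ ∈ H := by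
    constructor
    · intro h
      have hg : g ∈ (H : Set G) * ({g} : Set G) :=
        ⟨1, H.one_mem, g, rfl, one_mul g⟩
      rw [h] at hg
      obtain ⟨h1, hh1, x, hx, hxe⟩ := hg
      rw [Set.mem_singleton_iff] at hx
      rw [hx] at hxe
      have : g * g'⁻¹ = h1 := by
        rw [← hxe]; group
      rw [this]; exact hh1
    · intro h
      ext x
      constructor
      · rintro ⟨h1, hh1, y, hy, rfl⟩
        rw [Set.mem_singleton_iff] at hy; rw [hy]
        exact ⟨h1 * (g * g'⁻¹), H.mul_mem hh1 h, g', rfl, by group⟩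
      · rintro ⟨h1, hh1, y, hy, rfl⟩
        rw [Set.mem_singleton_iff] at hy; rw [hy]
        exact ⟨h1 * (g * g'⁻¹)⁻¹, H.mul_mem hh1 (H.inv_mem h), g, rfl, by group⟩
  -- antitone chain
  have hmono : ∀ i j : ℕ, i ≤ j → j < n → Gs j ≤ Gs i := by
    intro i j hij hj
    induction j with
    | zero => cases Nat.le_zero.mp hij; exact le_rfl
    | succ k ih =>
      rcases Nat.lt_or_ge i (k+1) with h1 | h1
      · exact (hchain k hj).trans (ih (Nat.lt_succ_iff.mp h1) (Nat.lt_of_succ_lt hj))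
      · have : i = k + 1 := le_antisymm hij h1
        subst this; exact le_rfl
  -- membership of coordinates
  have hmemc : ∀ i, i < n → coords i ∈ Gs i := by
    intro i hi
    induction i with
    | zero => rw [htop]; trivial
    | succ k ih =>
      rw [hcstep k hi]
      have := hmem k hi (coords k)
      have h2 : (r k (coords k) * (coords k)⁻¹)⁻¹ ∈ Gs (k+1) := (Gs (k+1)).inv_mem this
      simpa [mul_inv_rev] using h2
  have hmemc' : ∀ i, i < n → coords' i ∈ Gs i := by
    intro i hi
    induction i with
    | zero => rw [htop]; trivial
    | succ k ih =>
      rw [hcstep' k hi]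
      have := hmem k hi (coords' k)
      have h2 : (r k (coords' k) * (coords' k)⁻¹)⁻¹ ∈ Gs (k+1) := (Gs (k+1)).inv_mem this
      simpa [mul_inv_rev] using h2
  rw [hcoset]
  constructor
  · intro heq
    have key : ∀ i, i < n → coords i * (coords' i)⁻¹ = g * g'⁻¹ := by
      intro i hi
      induction i with
      | zero => rw [hc0, hc0']
      | succ k ih =>
        rw [hcstep k hi, hcstep' k hi, heq k hi]
        rw [← ih (Nat.lt_of_succ_lt hi)]
        group
    have h1 := hmemc (n-1) (by omega)
    have h2 := hmemc' (n-1) (by omega)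
    have := key (n-1) (by omega)
    rw [← this, ← hend]
    exact (Gs (n-1)).mul_mem h1 ((Gs (n-1)).inv_mem h2)
  · intro hgg
    have key : ∀ i, i < n → coords i * (coords' i)⁻¹ = g * g'⁻¹ := by
      intro i hi
      induction i with
      | zero => rw [hc0, hc0']
      | succ k ih =>
        have ihk := ih (Nat.lt_of_succ_lt hi)
        have hin : g * g'⁻¹ ∈ Gs (k+1) := by
          have : Gs (n-1) ≤ Gs (k+1) := hmono (k+1) (n-1) (by omega) (by omega)
          exact this (by rw [hend]; exact hgg)
        have hrk : r k (coords k) = r k (coords' k) :=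
          hconst k hi (coords k) (coords' k) (by rw [ihk]; exact hin)
        rw [hcstep k hi, hcstep' k hi, hrk, ← ihk]
        group
    intro i hi
    have hin : g * g'⁻¹ ∈ Gs (i+1) := by
      have : Gs (n-1) ≤ Gs (i+1) := hmono (i+1) (n-1) (by omega) (by omega)
      exact this (by rw [hend]; exact hgg)
    exact hconst i hi (coords i) (coords' i)
      (by rw [key i (Nat.lt_of_succ_lt hi)]; exact hin)
end

section
/- Let G be a group with a subgroup chain G = G₁ ≥ G₂ ≥ ... ≥ Gₙ, and for each 1 ≤ i < n let rᵢ : G → G be a right-coset representative function for G_{i+1} mapping Gᵢ into Gᵢ. Fix g, h ∈ G with Lagrange coordinates g₁ = g, g_{i+1} = gᵢ·rᵢ(gᵢ)⁻¹, and define the component actions of h at the state of g by h₁ = h and h_{i+1} = rᵢ(gᵢ)·hᵢ·rᵢ(rᵢ(gᵢ)·hᵢ)⁻¹. Then for every 1 ≤ i ≤ n−1, the component action hᵢ belongs to the subgroup Gᵢ. -/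
/-- Let `G` be a group with a subgroup chain
`G = G₁ ≥ … ≥ Gₙ` (0-indexed: `Gs 0 = ⊤`), with right-coset representative
functions `rᵢ` for `G_{i+1}` mapping `Gᵢ` into `Gᵢ`. Fix `g, h ∈ G`, with
Lagrange coordinates `g₁ = g`, `g_{i+1} = gᵢ · rᵢ(gᵢ)⁻¹`, and component actions
of `h` at the state of `g` given by `h₁ = h`,
`h_{i+1} = rᵢ(gᵢ) · hᵢ · rᵢ(rᵢ(gᵢ)·hᵢ)⁻¹`. Then for every `1 ≤ i ≤ n−1` the
component action `hᵢ` belongs to `Gᵢ` (0-indexed: `hcomp i ∈ Gs i`). -/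
theorem lagrange_component_action_mem {G : Type*} [Group G] (n : ℕ) (hn : 1 ≤ n)
    (Gs : ℕ → Subgroup G) (htop : Gs 0 = ⊤)
    (hchain : ∀ i, i + 1 < n → Gs (i + 1) ≤ Gs i)
    (r : ℕ → G → G)
    (hmem : ∀ i, i + 1 < n → ∀ g : G, r i g * g⁻¹ ∈ Gs (i + 1))
    (hconst : ∀ i, i + 1 < n → ∀ g g' : G, g * g'⁻¹ ∈ Gs (i + 1) → r i g = r i g')
    (hmap : ∀ i, i + 1 < n → ∀ g ∈ Gs i, r i g ∈ Gs i)
    (g h : G) (coords : ℕ → G) (hc0 : coords 0 = g)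
    (hcstep : ∀ i, i + 1 < n → coords (i + 1) = coords i * (r i (coords i))⁻¹)
    (hcomp : ℕ → G) (hh0 : hcomp 0 = h)
    (hhstep : ∀ i, i + 1 < n →
      hcomp (i + 1) = r i (coords i) * hcomp i * (r i (r i (coords i) * hcomp i))⁻¹) :
    ∀ i, i + 1 < n → hcomp i ∈ Gs i := by
  intro i hi
  cases i with
  | zero => rw [htop]; trivial
  | succ j =>
    have hj : j + 1 < n := Nat.lt_of_succ_lt hi
    rw [hhstep j hj, mul_assoc]
    have := inv_mem (hmem j hj (r j (coords j) * hcomp j))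
    simpa [mul_inv_rev, mul_assoc] using this
end

section
/- Let G be a group with a subgroup chain G = G₁ ≥ G₂ ≥ ... ≥ Gₙ, and for each 1 ≤ i < n let rᵢ : G → G be a right-coset representative function for G_{i+1} mapping Gᵢ into Gᵢ. Fix g, h ∈ G. Let g₁ = g, g_{i+1} = gᵢ·rᵢ(gᵢ)⁻¹ be the Lagrange coordinates of g, let (gh)₁ = g·h, (gh)_{i+1} = (gh)ᵢ·rᵢ((gh)ᵢ)⁻¹ be the Lagrange coordinates of g·h, and let h₁ = h, h_{i+1} = rᵢ(gᵢ)·hᵢ·rᵢ(rᵢ(gᵢ)·hᵢ)⁻¹ be the component actions of h at the state of g. Then for every 1 ≤ i ≤ n−1, rᵢ((gh)ᵢ) = rᵢ(rᵢ(gᵢ)·hᵢ); that is, ρ_s(g·h) = ρ_s(g)·ρ_p(h): acting with the raised permutation of h on the coordinates of g yields exactly the coordinates of g·h. -/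
/-- Let `G` be a group with a subgroup chain
`G = G₁ ≥ … ≥ Gₙ` (0-indexed: `Gs 0 = ⊤`), with right-coset representative
functions `rᵢ` for `G_{i+1}` mapping `Gᵢ` into `Gᵢ`. Fix `g, h ∈ G`. Let
`g₁ = g`, `g_{i+1} = gᵢ · rᵢ(gᵢ)⁻¹` be the Lagrange coordinates of `g`, let
`(gh)₁ = g·h`, `(gh)_{i+1} = (gh)ᵢ · rᵢ((gh)ᵢ)⁻¹` be the Lagrange coordinates
of `g·h`, and let `h₁ = h`, `h_{i+1} = rᵢ(gᵢ) · hᵢ · rᵢ(rᵢ(gᵢ)·hᵢ)⁻¹` be the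
component actions of `h` at the state of `g`. Then for every `1 ≤ i ≤ n−1`,
`rᵢ((gh)ᵢ) = rᵢ(rᵢ(gᵢ)·hᵢ)`; that is, `ρ_s(g·h) = ρ_s(g)·ρ_p(h)`. -/
theorem lagrange_raising_mul {G : Type*} [Group G] (n : ℕ) (hn : 1 ≤ n)
    (Gs : ℕ → Subgroup G) (htop : Gs 0 = ⊤)
    (hchain : ∀ i, i + 1 < n → Gs (i + 1) ≤ Gs i)
    (r : ℕ → G → G)
    (hmem : ∀ i, i + 1 < n → ∀ g : G, r i g * g⁻¹ ∈ Gs (i + 1))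
    (hconst : ∀ i, i + 1 < n → ∀ g g' : G, g * g'⁻¹ ∈ Gs (i + 1) → r i g = r i g')
    (hmap : ∀ i, i + 1 < n → ∀ g ∈ Gs i, r i g ∈ Gs i)
    (g h : G)
    (coordsG : ℕ → G) (hg0 : coordsG 0 = g)
    (hgstep : ∀ i, i + 1 < n → coordsG (i + 1) = coordsG i * (r i (coordsG i))⁻¹)
    (coordsGH : ℕ → G) (hgh0 : coordsGH 0 = g * h)
    (hghstep : ∀ i, i + 1 < n → coordsGH (i + 1) = coordsGH i * (r i (coordsGH i))⁻¹)
    (hcomp : ℕ → G) (hh0 : hcomp 0 = h)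
    (hhstep : ∀ i, i + 1 < n →
      hcomp (i + 1) = r i (coordsG i) * hcomp i * (r i (r i (coordsG i) * hcomp i))⁻¹) :
    ∀ i, i + 1 < n → r i (coordsGH i) = r i (r i (coordsG i) * hcomp i) := by
  have key : ∀ i, i < n → coordsGH i = coordsG i * hcomp i := by
    intro i
    induction i with
    | zero => intro _; rw [hgh0, hg0, hh0]
    | succ k ih =>
      intro hk
      have heq := ih (Nat.lt_of_succ_lt hk)
      have hstep : r k (coordsGH k) = r k (r k (coordsG k) * hcomp k) := by
        apply hconst k hk
        rw [heq]
        have h2 : coordsG k * hcomp k * (r k (coordsG k) * hcomp k)⁻¹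
            = (r k (coordsG k) * (coordsG k)⁻¹)⁻¹ := by group
        rw [h2]
        exact (Gs (k + 1)).inv_mem (hmem k hk _)
      rw [hghstep k hk, hstep, heq, hgstep k hk, hhstep k hk]
      group
  intro i hi
  have heq := key i (Nat.lt_of_succ_lt hi)
  apply hconst i hi
  rw [heq]
  have h2 : coordsG i * hcomp i * (r i (coordsG i) * hcomp i)⁻¹
      = (r i (coordsG i) * (coordsG i)⁻¹)⁻¹ := by group
  rw [h2]
  exact (Gs (i + 1)).inv_mem (hmem i hi _)
end
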